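/- arXiv:2605.06612 — 5 statements merged into one kernel-verified Lean document; each statement's English description precedes it below -/
import Mathlib

section
/- One-step inequality for the recursive discrepancy mean: Fix t and let M_{t−1} ∈ ℝ^{d_{t−1}×d_{t−1}} and M_t ∈ ℝ^{d_t×d_t} be symmetric positive definite, A_t ∈ ℝ^{d_t×d_{t−1}}, R_t ∈ ℝ^{K_t×K_t} symmetric positive definite, G_t ∈ ℝ^{K_t×d_t}, r_t ∈ ℝ^{K_t}, and η > 0. Define ℓ_t(u) = (1/2)‖r_t − G_t u‖²_{R_t⁻¹}. Suppose γ ∈ [0,1) satisfies A_tᵀ M_t A_t ⪯ γ M_{t−1} (Loewner order), and let m_t be the unique minimizer of u ↦ η ℓ_t(u) + (1/2)‖u − A_t m_{t−1}‖²_{M_t}, for a given m_{t−1} ∈ ℝ^{d_{t−1}}. Then for all v_t ∈ ℝ^{d_t} and v_{t−1} ∈ ℝ^{d_{t−1}}: η(ℓ_t(m_t) − ℓ_t(v_t)) ≤ (1/(2(1−γ)))‖v_t − A_t v_{t−1}‖²_{M_t} + (1/2)‖v_{t−1} − m_{t−1}‖²_{M_{t−1}} − (1/2)‖v_t − m_t‖²_{M_t}.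 -/
open Matrix

private lemma sym_dot {n : Type*} [Fintype n] {M : Matrix n n ℝ} (hM : Mᵀ = M)
    (x y : n → ℝ) : y ⬝ᵥ M *ᵥ x = x ⬝ᵥ M *ᵥ y := by
  rw [dotProduct_mulVec, ← mulVec_transpose, hM, dotProduct_comm]

private lemma quad_expand_smul {n : Type*} [Fintype n] {M : Matrix n n ℝ} (hM : Mᵀ = M)
    (x y : n → ℝ) (s : ℝ) :
    (x + s • y) ⬝ᵥ M *ᵥ (x + s • y)
      = x ⬝ᵥ M *ᵥ x + 2 * s * (x ⬝ᵥ M *ᵥ y) + s ^ 2 * (y ⬝ᵥ M *ᵥ y) := by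
  rw [mulVec_add, mulVec_smul, dotProduct_add, add_dotProduct, add_dotProduct,
    smul_dotProduct, smul_dotProduct, dotProduct_smul, dotProduct_smul, sym_dot hM x y]
  simp only [smul_eq_mul]
  ring

private lemma quad_expand {n : Type*} [Fintype n] {M : Matrix n n ℝ} (hM : Mᵀ = M)
    (x y : n → ℝ) :
    (x + y) ⬝ᵥ M *ᵥ (x + y)
      = x ⬝ᵥ M *ᵥ x + 2 * (x ⬝ᵥ M *ᵥ y) + y ⬝ᵥ M *ᵥ y := by
  have := quad_expand_smul hM x y 1
  simpa using this

private lemma psd_apply {n : Type*} [Fintype n] {M : Matrix n n ℝ} (hM : M.PosSemidef)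
    (x : n → ℝ) : 0 ≤ x ⬝ᵥ M *ᵥ x := by
  simpa using hM.dotProduct_mulVec_nonneg x

private lemma young {n : Type*} [Fintype n] {M : Matrix n n ℝ} (hM : M.PosSemidef)
    (hMs : Mᵀ = M) (y z : n → ℝ) {c : ℝ} (hc : 0 < c) :
    2 * (y ⬝ᵥ M *ᵥ z) ≤ c * (y ⬝ᵥ M *ᵥ y) + (1 / c) * (z ⬝ᵥ M *ᵥ z) := by
  have h0 : 0 ≤ (z + (-c) • y) ⬝ᵥ M *ᵥ (z + (-c) • y) := psd_apply hM _
  rw [quad_expand_smul hMs] at h0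
  rw [sym_dot hMs y z] at h0
  have h1 : 2 * (y ⬝ᵥ M *ᵥ z) * c ≤ (c * (y ⬝ᵥ M *ᵥ y) + (1 / c) * (z ⬝ᵥ M *ᵥ z)) * c := by
    field_simp
    nlinarith [h0]
  exact le_of_mul_le_mul_right h1 hc

private lemma lin_coeff_zero {a b : ℝ} (hb : 0 ≤ b) (h : ∀ s : ℝ, 0 ≤ s * a + s ^ 2 * b) :
    a = 0 := by
  have hb1 : 0 < b + 1 := by linarith
  have h2 := h (-a / (b + 1))
  have h3 : 0 ≤ (-a / (b + 1) * a + (-a / (b + 1)) ^ 2 * b) * (b + 1) ^ 2 :=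
    mul_nonneg h2 (by positivity)
  have h4 : (-a / (b + 1) * a + (-a / (b + 1)) ^ 2 * b) * (b + 1) ^ 2 = -(a ^ 2) := by
    field_simp
    ring
  nlinarith [sq_nonneg a]

set_option maxHeartbeats 1000000 in
/-- one-step inequality for the recursive discrepancy mean.
`dPrev = d_{t−1}`, `dCur = d_t`, `Mprev = M_{t−1}`, `Mcur = M_t`, `A = A_t`,
`R = R_t`, `G = G_t`, `r = r_t`, `ℓ(u) = (1/2)‖r − G u‖²_{R⁻¹}`,
`A_tᵀ M_t A_t ⪯ γ M_{t−1}`, and `m` the minimizer of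
`u ↦ η ℓ(u) + (1/2)‖u − A mprev‖²_{M_t}`. -/
theorem stmt_3 (dPrev dCur Kt : ℕ)
    (Mprev : Matrix (Fin dPrev) (Fin dPrev) ℝ) (Mcur : Matrix (Fin dCur) (Fin dCur) ℝ)
    (hMprev : Mprev.PosDef) (hMcur : Mcur.PosDef)
    (A : Matrix (Fin dCur) (Fin dPrev) ℝ)
    (R : Matrix (Fin Kt) (Fin Kt) ℝ) (hR : R.PosDef)
    (G : Matrix (Fin Kt) (Fin dCur) ℝ) (r : Fin Kt → ℝ)
    (η : ℝ) (hη : 0 < η)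
    (γ : ℝ) (hγ0 : 0 ≤ γ) (hγ1 : γ < 1)
    (hcontr : (γ • Mprev - Aᵀ * Mcur * A).PosSemidef)
    (mprev : Fin dPrev → ℝ) (m : Fin dCur → ℝ)
    (lloss : (Fin dCur → ℝ) → ℝ)
    (hloss : lloss = fun u => 1 / 2 * ((r - G *ᵥ u) ⬝ᵥ (R⁻¹ *ᵥ (r - G *ᵥ u))))
    (hm : ∀ u : Fin dCur → ℝ,
      η * lloss m + 1 / 2 * ((m - A *ᵥ mprev) ⬝ᵥ (Mcur *ᵥ (m - A *ᵥ mprev)))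
        ≤ η * lloss u + 1 / 2 * ((u - A *ᵥ mprev) ⬝ᵥ (Mcur *ᵥ (u - A *ᵥ mprev)))) :
    ∀ (v : Fin dCur → ℝ) (vprev : Fin dPrev → ℝ),
      η * (lloss m - lloss v)
        ≤ 1 / (2 * (1 - γ)) * ((v - A *ᵥ vprev) ⬝ᵥ (Mcur *ᵥ (v - A *ᵥ vprev)))
          + 1 / 2 * ((vprev - mprev) ⬝ᵥ (Mprev *ᵥ (vprev - mprev)))
          - 1 / 2 * ((v - m) ⬝ᵥ (Mcur *ᵥ (v - m))) := by
  intro v vprev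
  have h1γ : (0:ℝ) < 1 - γ := by linarith
  -- symmetry facts
  have hMcs : Mcurᵀ = Mcur := by
    have := hMcur.isHermitian
    rwa [Matrix.IsHermitian, conjTranspose_eq_transpose_of_trivial] at this
  have hMps : Mprevᵀ = Mprev := by
    have := hMprev.isHermitian
    rwa [Matrix.IsHermitian, conjTranspose_eq_transpose_of_trivial] at this
  have hRi : (R⁻¹).PosDef := hR.inv
  have hRis : (R⁻¹)ᵀ = R⁻¹ := by
    have := hRi.isHermitian
    rwa [Matrix.IsHermitian, conjTranspose_eq_transpose_of_trivial] at this
  -- abbreviations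
  set x : Fin dCur → ℝ := v - m with hxdef
  set p : Fin dCur → ℝ := m - A *ᵥ mprev with hpdef
  set y : Fin dCur → ℝ := v - A *ᵥ vprev with hydef
  set q : Fin dPrev → ℝ := vprev - mprev with hqdef
  set z : Fin dCur → ℝ := A *ᵥ q with hzdef
  set c1 : ℝ := (r - G *ᵥ m) ⬝ᵥ R⁻¹ *ᵥ (G *ᵥ x) with hc1def
  set c2 : ℝ := (G *ᵥ x) ⬝ᵥ R⁻¹ *ᵥ (G *ᵥ x) with hc2def
  set c3 : ℝ := p ⬝ᵥ Mcur *ᵥ x with hc3def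
  set c4 : ℝ := x ⬝ᵥ Mcur *ᵥ x with hc4def
  set P : ℝ := y ⬝ᵥ Mcur *ᵥ y with hPdef
  set Q : ℝ := y ⬝ᵥ Mcur *ᵥ z with hQdef
  set Z : ℝ := z ⬝ᵥ Mcur *ᵥ z with hZdef
  set S : ℝ := q ⬝ᵥ Mprev *ᵥ q with hSdef
  set pp : ℝ := p ⬝ᵥ Mcur *ᵥ p with hppdef
  -- loss expansion
  have lexp : ∀ s : ℝ, lloss (m + s • x) = lloss m - s * c1 + s ^ 2 / 2 * c2 := by
    intro s
    have hv : r - G *ᵥ (m + s • x) = (r - G *ᵥ m) + (-s) • (G *ᵥ x) := by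
      rw [mulVec_add, mulVec_smul]
      ext i
      simp
      ring
    rw [hloss]
    simp only []
    rw [hv, quad_expand_smul hRis]
    rw [hc1def, hc2def]
    ring
  -- quadratic term shift
  have hqs : ∀ s : ℝ, m + s • x - A *ᵥ mprev = p + s • x := by
    intro s
    ext i
    simp [hpdef]
    ring
  -- first-order optimality: a = 0
  have hc2nn : 0 ≤ c2 := psd_apply hRi.posSemidef _
  have hc4nn : 0 ≤ c4 := psd_apply hMcur.posSemidef _
  have hppnn : 0 ≤ pp := psd_apply hMcur.posSemidef _
  have hSnn : 0 ≤ S := psd_apply hMprev.posSemidef _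
  have hab : ∀ s : ℝ, 0 ≤ s * (c3 - η * c1) + s ^ 2 * ((η * c2 + c4) / 2) := by
    intro s
    have h := hm (m + s • x)
    rw [lexp s, hqs s, quad_expand_smul hMcs] at h
    rw [← hc3def, ← hc4def, ← hppdef] at h
    nlinarith [h]
  have hbnn : 0 ≤ (η * c2 + c4) / 2 := by nlinarith
  have ha : c3 - η * c1 = 0 := lin_coeff_zero hbnn hab
  -- value at v
  have hv1 : v = m + (1:ℝ) • x := by
    ext i
    simp [hxdef, Pi.sub_apply]
  have hlv : lloss v = lloss m - c1 + 1 / 2 * c2 := by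
    rw [hv1, lexp 1]; ring
  -- geometric identity  y + z = p + x
  have hyz : y + z = p + x := by
    rw [hydef, hzdef, hpdef, hxdef, hqdef, mulVec_sub]
    ext i
    simp [Pi.sub_apply, Pi.add_apply]
  have hid : P + 2 * Q + Z = pp + 2 * c3 + c4 := by
    have e1 : (y + z) ⬝ᵥ Mcur *ᵥ (y + z) = P + 2 * Q + Z := quad_expand hMcs y z
    have e2 : (p + x) ⬝ᵥ Mcur *ᵥ (p + x) = pp + 2 * c3 + c4 := quad_expand hMcs p x
    rw [← e1, ← e2, hyz]
  -- contraction
  have hZle : Z ≤ γ * S := by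
    have h := psd_apply hcontr q
    rw [sub_mulVec, dotProduct_sub, smul_mulVec, dotProduct_smul] at h
    have e : q ⬝ᵥ (Aᵀ * Mcur * A) *ᵥ q = Z := by
      rw [hZdef, hzdef, ← mulVec_mulVec, ← mulVec_mulVec, dotProduct_mulVec,
        vecMul_transpose]
    rw [e, smul_eq_mul, ← hSdef] at h
    linarith
  have hZnn : 0 ≤ Z := psd_apply hMcur.posSemidef _
  -- key inequality
  have key : c3 ≤ 1 / (2 * (1 - γ)) * P + 1 / 2 * S - 1 / 2 * c4 := by
    rcases eq_or_lt_of_le hγ0 with hγe | hγp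
    · -- γ = 0
      have hZ0 : Z = 0 := le_antisymm (by nlinarith) hZnn
      have hQ0 : 2 * Q = 0 := by
        have hPnn : 0 ≤ P := psd_apply hMcur.posSemidef _
        refine lin_coeff_zero hPnn ?_
        intro t
        have h := psd_apply hMcur.posSemidef (z + t • y)
        rw [quad_expand_smul hMcs, sym_dot hMcs y z] at h
        rw [← hZdef, ← hQdef, ← hPdef, hZ0] at h
        nlinarith [h]
      have hγ' : 1 / (2 * (1 - γ)) = 1 / 2 := by rw [← hγe]; norm_num
      rw [hγ']
      linarith [hid, hppnn, hSnn, hZ0, hQ0]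
    · -- γ > 0
      have hc : (0:ℝ) < γ / (1 - γ) := div_pos hγp h1γ
      have hy2 := young hMcur.posSemidef hMcs y z hc
      rw [← hPdef, ← hQdef, ← hZdef] at hy2
      have e1 : 1 / (2 * (1 - γ)) * P = 1 / 2 * P + γ / (1 - γ) * P / 2 := by
        field_simp
        ring
      have e2 : 1 / (γ / (1 - γ)) * Z = (1 - γ) / γ * Z := by
        rw [one_div_div]
      have e3' : (1 - γ) / γ * Z + Z = (1 / γ) * Z := by
        field_simp
        ring
      have e4 : (1 / γ) * Z ≤ S := by
        rw [div_mul_eq_mul_div, one_mul, div_le_iff₀ hγp]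
        linarith [hZle]
      rw [e2] at hy2
      linarith [hid, hppnn]
  -- conclude
  have hfin : η * (lloss m - lloss v) = η * c1 - η / 2 * c2 := by
    rw [hlv]; ring
  rw [hfin]
  nlinarith [key, hc2nn, hη, ha]
end

section
/- Tracking of the BRPC discrepancy mean (Theorem 1): Let T ≥ 1, d_0,…,d_T ≥ 1, and for each t = 1,…,T let M_t ∈ ℝ^{d_t×d_t} be symmetric positive definite (with M_0 ∈ ℝ^{d_0×d_0} symmetric positive definite), A_t ∈ ℝ^{d_t×d_{t−1}}, R_t ∈ ℝ^{K_t×K_t} symmetric positive definite, G_t ∈ ℝ^{K_t×d_t}, r_t ∈ ℝ^{K_t}, and define ℓ_t(u) = (1/2)‖r_t − G_t u‖²_{R_t⁻¹}. Fix η > 0 and γ ∈ [0,1) and assume the stable-propagation condition A_tᵀ M_t A_t ⪯ γ M_{t−1} for all t = 1,…,T. Starting from m_0 ∈ ℝ^{d_0}, define recursively m_t as the unique minimizer of u ↦ η ℓ_t(u) + (1/2)‖u − A_t m_{t−1}‖²_{M_t}. Then for every reference sequence v_0 ∈ ℝ^{d_0}, …, v_T ∈ ℝ^{d_T}: Σ_{t=1}^T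 (ℓ_t(m_t) − ℓ_t(v_t)) ≤ (1/(2η))‖v_0 − m_0‖²_{M_0} + (1/(2η(1−γ))) Σ_{t=1}^T ‖v_t − A_t v_{t−1}‖²_{M_t}. -/
open Matrix

lemma dotsymm {n : Type*} [Fintype n] (N : Matrix n n ℝ) (h : Nᵀ = N) (x y : n → ℝ) :
    x ⬝ᵥ (N *ᵥ y) = y ⬝ᵥ (N *ᵥ x) := by
  rw [dotProduct_mulVec, ← mulVec_transpose, h, dotProduct_comm]

lemma psd_nonneg {n : Type*} [Fintype n] {N : Matrix n n ℝ} (h : N.PosSemidef) (x : n → ℝ) :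
    0 ≤ x ⬝ᵥ (N *ᵥ x) := by simpa using h.dotProduct_mulVec_nonneg x

lemma symm_of_psd {n : Type*} [Fintype n] {N : Matrix n n ℝ} (h : N.PosSemidef) : Nᵀ = N := by
  simpa [Matrix.IsHermitian] using h.1

lemma bilin_expand {n : Type*} [Fintype n] (N : Matrix n n ℝ) (hN : Nᵀ = N)
    (a b : n → ℝ) (lam : ℝ) :
    (a + lam • b) ⬝ᵥ (N *ᵥ (a + lam • b))
      = a ⬝ᵥ (N *ᵥ a) + 2 * lam * (b ⬝ᵥ (N *ᵥ a)) + lam ^ 2 * (b ⬝ᵥ (N *ᵥ b)) := by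
  have h := dotsymm N hN a b
  simp only [mulVec_add, mulVec_smul, dotProduct_add, add_dotProduct, dotProduct_smul,
    smul_dotProduct, smul_eq_mul]
  rw [h]; ring

lemma grad_zero (D H : ℝ) (hH : 0 ≤ H) (key : ∀ lam : ℝ, 0 ≤ lam * D + lam ^ 2 * H) :
    D = 0 := by
  have hq : (0:ℝ) < 2 * H + 1 := by linarith
  have hk := key (-(D / (2 * H + 1)))
  have hrw : (-(D / (2 * H + 1)) * D + (-(D / (2 * H + 1))) ^ 2 * H) * (2 * H + 1) ^ 2
      = -(D ^ 2 * (H + 1)) := by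
    field_simp
    ring
  have h2 : 0 ≤ -(D ^ 2 * (H + 1)) := hrw ▸ mul_nonneg hk (sq_nonneg _)
  have h4 : D ^ 2 = 0 := le_antisymm (by nlinarith) (sq_nonneg D)
  exact pow_eq_zero_iff (two_ne_zero) |>.mp h4

lemma scalar_split (X Y c s γ : ℝ) (hX : 0 ≤ X) (hY : 0 ≤ Y) (hs : 0 ≤ s)
    (hγ0 : 0 ≤ γ) (hγ1 : γ < 1) (hYs : Y ≤ γ * s)
    (key : ∀ μ : ℝ, 0 ≤ μ ^ 2 * X + 2 * μ * c + Y) :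
    X + 2 * c + Y ≤ X / (1 - γ) + s := by
  have h1γ : (0:ℝ) < 1 - γ := by linarith
  rcases eq_or_lt_of_le hγ0 with h0 | hpos
  · subst h0
    have hY0 : Y = 0 := le_antisymm (by nlinarith) hY
    have hk := key (-(c / (X + 1)))
    have hx1 : (0:ℝ) < X + 1 := by linarith
    have hrw : ((-(c / (X + 1))) ^ 2 * X + 2 * (-(c / (X + 1))) * c + Y) * (X + 1) ^ 2
        = -(c ^ 2 * (X + 2)) + Y * (X + 1) ^ 2 := by
      field_simp
      ring
    have h2 : 0 ≤ -(c ^ 2 * (X + 2)) + Y * (X + 1) ^ 2 := hrw ▸ mul_nonneg hk (sq_nonneg _)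
    have hc2 : c ^ 2 = 0 := by nlinarith [sq_nonneg c]
    have hc : c = 0 := pow_eq_zero_iff (two_ne_zero) |>.mp hc2
    rw [hc, hY0]
    norm_num
    linarith
  · have hk := key (-(γ / (1 - γ)))
    have hrw : ((-(γ / (1 - γ))) ^ 2 * X + 2 * (-(γ / (1 - γ))) * c + Y) * (1 - γ) ^ 2
        = γ ^ 2 * X - 2 * γ * (1 - γ) * c + Y * (1 - γ) ^ 2 := by
      field_simp
      ring
    have h2 : 0 ≤ γ ^ 2 * X - 2 * γ * (1 - γ) * c + Y * (1 - γ) ^ 2 :=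
      hrw ▸ mul_nonneg hk (sq_nonneg _)
    have key2 : (X + 2 * c + Y - s) * (1 - γ) ≤ X := by
      nlinarith [h2, mul_nonneg h1γ.le (sub_nonneg.mpr hYs), hpos, mul_pos hpos h1γ]
    have h3 : X + 2 * c + Y - s ≤ X / (1 - γ) := (le_div_iff₀ h1γ).mpr key2
    linarith

/-- Optimality of a regularized quadratic loss minimizer. -/
lemma opt_step {n k : ℕ} (M : Matrix (Fin n) (Fin n) ℝ) (hM : M.PosSemidef)
    (Rm : Matrix (Fin k) (Fin k) ℝ) (hRm : Rm.PosSemidef)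
    (G : Matrix (Fin k) (Fin n) ℝ) (r : Fin k → ℝ) (η : ℝ) (hη : 0 < η)
    (p ms : Fin n → ℝ) (L : (Fin n → ℝ) → ℝ)
    (hL : ∀ u, L u = 1 / 2 * ((r - G *ᵥ u) ⬝ᵥ (Rm *ᵥ (r - G *ᵥ u))))
    (hmin : ∀ u, η * L ms + 1 / 2 * ((ms - p) ⬝ᵥ (M *ᵥ (ms - p)))
        ≤ η * L u + 1 / 2 * ((u - p) ⬝ᵥ (M *ᵥ (u - p))))
    (v : Fin n → ℝ) :
    η * (L ms - L v) ≤ 1 / 2 * ((v - p) ⬝ᵥ (M *ᵥ (v - p)))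
      - 1 / 2 * ((v - ms) ⬝ᵥ (M *ᵥ (v - ms))) := by
  have hMs := symm_of_psd hM
  have hRs := symm_of_psd hRm
  have keyexp : ∀ lam : ℝ,
      η * L (ms + lam • (v - ms))
          + 1 / 2 * ((ms + lam • (v - ms) - p) ⬝ᵥ (M *ᵥ (ms + lam • (v - ms) - p)))
        = (η * L ms + 1 / 2 * ((ms - p) ⬝ᵥ (M *ᵥ (ms - p))))
          + lam * (-η * ((G *ᵥ (v - ms)) ⬝ᵥ (Rm *ᵥ (r - G *ᵥ ms)))
              + ((v - ms) ⬝ᵥ (M *ᵥ (ms - p))))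
          + lam ^ 2 * (η / 2 * ((G *ᵥ (v - ms)) ⬝ᵥ (Rm *ᵥ (G *ᵥ (v - ms))))
              + 1 / 2 * ((v - ms) ⬝ᵥ (M *ᵥ (v - ms)))) := by
    intro lam
    have e1 : r - G *ᵥ (ms + lam • (v - ms)) = (r - G *ᵥ ms) + (-lam) • (G *ᵥ (v - ms)) := by
      simp only [mulVec_add, mulVec_smul]
      ext i
      simp only [Pi.add_apply, Pi.sub_apply, Pi.smul_apply, smul_eq_mul, Pi.neg_apply]
      ring
    have e2 : ms + lam • (v - ms) - p = (ms - p) + lam • (v - ms) := by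
      ext i
      simp only [Pi.add_apply, Pi.sub_apply, Pi.smul_apply, smul_eq_mul]
      ring
    rw [hL, hL, e1, e2, bilin_expand Rm hRs _ _ (-lam), bilin_expand M hMs _ _ lam]
    ring
  have hQnn : 0 ≤ (G *ᵥ (v - ms)) ⬝ᵥ (Rm *ᵥ (G *ᵥ (v - ms))) := psd_nonneg hRm _
  have hWnn : 0 ≤ (v - ms) ⬝ᵥ (M *ᵥ (v - ms)) := psd_nonneg hM _
  have hFnn : 0 ≤ (ms - p) ⬝ᵥ (M *ᵥ (ms - p)) := psd_nonneg hM _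
  have hHnn : 0 ≤ η / 2 * ((G *ᵥ (v - ms)) ⬝ᵥ (Rm *ᵥ (G *ᵥ (v - ms))))
      + 1 / 2 * ((v - ms) ⬝ᵥ (M *ᵥ (v - ms))) := by positivity
  have hDzero : -η * ((G *ᵥ (v - ms)) ⬝ᵥ (Rm *ᵥ (r - G *ᵥ ms)))
      + ((v - ms) ⬝ᵥ (M *ᵥ (ms - p))) = 0 := by
    refine grad_zero _ _ hHnn fun lam => ?_
    have h1 := hmin (ms + lam • (v - ms))
    have h2 := keyexp lam
    linarith
  have hv : ms + (1:ℝ) • (v - ms) = v := by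
    ext i; simp
  have h1 := keyexp 1
  rw [hv] at h1
  have hq2 : 0 ≤ η / 2 * ((G *ᵥ (v - ms)) ⬝ᵥ (Rm *ᵥ (G *ᵥ (v - ms)))) := by positivity
  nlinarith [h1, hDzero, hq2, hFnn]

lemma assemble (T : ℕ) (η γ : ℝ) (hη : 0 < η) (hγ1 : γ < 1) (dif a b : ℕ → ℝ)
    (haT : 0 ≤ a T)
    (hstep : ∀ t, t < T →
      η * dif t ≤ (1 / 2 * a t - 1 / 2 * a (t + 1)) + 1 / (2 * (1 - γ)) * b t) :
    ∑ t ∈ Finset.range T, dif t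
      ≤ 1 / (2 * η) * a 0 + 1 / (2 * η * (1 - γ)) * ∑ t ∈ Finset.range T, b t := by
  have h1γ : (0:ℝ) < 1 - γ := by linarith
  have hsum : η * ∑ t ∈ Finset.range T, dif t
      ≤ (1 / 2 * a 0 - 1 / 2 * a T) + 1 / (2 * (1 - γ)) * ∑ t ∈ Finset.range T, b t := by
    rw [Finset.mul_sum, Finset.mul_sum,
      ← Finset.sum_range_sub' (fun t => 1 / 2 * a t) T, ← Finset.sum_add_distrib]
    exact Finset.sum_le_sum fun t ht => hstep t (Finset.mem_range.mp ht)
  have h2 : ∑ t ∈ Finset.range T, dif t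
      ≤ (1 / 2 * a 0 + 1 / (2 * (1 - γ)) * ∑ t ∈ Finset.range T, b t) / η := by
    rw [le_div_iff₀ hη, mul_comm]
    linarith
  have h3 : (1 / 2 * a 0 + 1 / (2 * (1 - γ)) * ∑ t ∈ Finset.range T, b t) / η
      = 1 / (2 * η) * a 0 + 1 / (2 * η * (1 - γ)) * ∑ t ∈ Finset.range T, b t := by
    field_simp
  linarith


/-- Tracking of the BRPC discrepancy mean (Theorem 1).
Time `t ∈ {0,…,T}`; `A t` propagates the state at time `t` to time `t+1`, so the
matrices `A 0, …, A (T−1)` play the role of `A_1, …, A_T`; the loss at time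
`t` is `ℓ t (u) = (1/2)‖r t − G t u‖²_{(R t)⁻¹}`.  Under the stable-propagation
condition `(A t)ᵀ M (t+1) (A t) ⪯ γ • M t` and the recursive minimization
defining `m (t+1)`, the cumulative loss of `m` relative to any reference
sequence `v` is bounded. -/
theorem stmt_4 (T : ℕ) (hT : 1 ≤ T)
    (d : ℕ → ℕ) (hd : ∀ t, t ≤ T → 1 ≤ d t)
    (K : ℕ → ℕ) (hK : ∀ t, 1 ≤ t → t ≤ T → 1 ≤ K t)
    (M : (t : ℕ) → Matrix (Fin (d t)) (Fin (d t)) ℝ)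
    (hM : ∀ t, t ≤ T → (M t).PosDef)
    (A : (t : ℕ) → Matrix (Fin (d (t + 1))) (Fin (d t)) ℝ)
    (R : (t : ℕ) → Matrix (Fin (K t)) (Fin (K t)) ℝ)
    (hR : ∀ t, 1 ≤ t → t ≤ T → (R t).PosDef)
    (G : (t : ℕ) → Matrix (Fin (K t)) (Fin (d t)) ℝ)
    (r : (t : ℕ) → Fin (K t) → ℝ)
    (lloss : (t : ℕ) → (Fin (d t) → ℝ) → ℝ)
    (hloss : ∀ t (u : Fin (d t) → ℝ),
      lloss t u = 1 / 2 * ((r t - G t *ᵥ u) ⬝ᵥ ((R t)⁻¹ *ᵥ (r t - G t *ᵥ u))))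
    (η : ℝ) (hη : 0 < η) (γ : ℝ) (hγ0 : 0 ≤ γ) (hγ1 : γ < 1)
    (hcontr : ∀ t, t < T → (γ • M t - (A t)ᵀ * M (t + 1) * A t).PosSemidef)
    (m : (t : ℕ) → Fin (d t) → ℝ)
    (hm : ∀ t, t < T → ∀ u : Fin (d (t + 1)) → ℝ,
      η * lloss (t + 1) (m (t + 1))
          + 1 / 2 * ((m (t + 1) - A t *ᵥ m t) ⬝ᵥ (M (t + 1) *ᵥ (m (t + 1) - A t *ᵥ m t)))
        ≤ η * lloss (t + 1) u
          + 1 / 2 * ((u - A t *ᵥ m t) ⬝ᵥ (M (t + 1) *ᵥ (u - A t *ᵥ m t)))) :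
    ∀ v : (t : ℕ) → Fin (d t) → ℝ,
      ∑ t ∈ Finset.range T, (lloss (t + 1) (m (t + 1)) - lloss (t + 1) (v (t + 1)))
        ≤ 1 / (2 * η) * ((v 0 - m 0) ⬝ᵥ (M 0 *ᵥ (v 0 - m 0)))
          + 1 / (2 * η * (1 - γ)) *
            ∑ t ∈ Finset.range T,
              ((v (t + 1) - A t *ᵥ v t) ⬝ᵥ (M (t + 1) *ᵥ (v (t + 1) - A t *ᵥ v t))) := by
  intro v
  refine assemble T η γ hη hγ1
    (fun t => lloss (t + 1) (m (t + 1)) - lloss (t + 1) (v (t + 1)))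
    (fun t => (v t - m t) ⬝ᵥ (M t *ᵥ (v t - m t)))
    (fun t => (v (t + 1) - A t *ᵥ v t) ⬝ᵥ (M (t + 1) *ᵥ (v (t + 1) - A t *ᵥ v t)))
    (psd_nonneg (hM T le_rfl).posSemidef _) ?_
  intro t ht
  have htT : t + 1 ≤ T := ht
  have hMp : (M (t + 1)).PosSemidef := (hM (t + 1) htT).posSemidef
  have hMsym : (M (t + 1))ᵀ = M (t + 1) := symm_of_psd hMp
  have hRp : ((R (t + 1))⁻¹).PosSemidef := ((hR (t + 1) (by omega) htT).inv).posSemidef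
  have hopt := opt_step (M (t + 1)) hMp ((R (t + 1))⁻¹) hRp (G (t + 1)) (r (t + 1)) η hη
    (A t *ᵥ m t) (m (t + 1)) (lloss (t + 1)) (hloss (t + 1)) (hm t ht) (v (t + 1))
  have hXnn : 0 ≤ (v (t + 1) - A t *ᵥ v t) ⬝ᵥ (M (t + 1) *ᵥ (v (t + 1) - A t *ᵥ v t)) :=
    psd_nonneg hMp _
  have hYnn : 0 ≤ (A t *ᵥ (v t - m t)) ⬝ᵥ (M (t + 1) *ᵥ (A t *ᵥ (v t - m t))) :=
    psd_nonneg hMp _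
  have hsnn : 0 ≤ (v t - m t) ⬝ᵥ (M t *ᵥ (v t - m t)) :=
    psd_nonneg (hM t (by omega)).posSemidef _
  have hkey : ∀ μ : ℝ,
      0 ≤ μ ^ 2 * ((v (t + 1) - A t *ᵥ v t) ⬝ᵥ (M (t + 1) *ᵥ (v (t + 1) - A t *ᵥ v t)))
        + 2 * μ * ((v (t + 1) - A t *ᵥ v t) ⬝ᵥ (M (t + 1) *ᵥ (A t *ᵥ (v t - m t))))
        + (A t *ᵥ (v t - m t)) ⬝ᵥ (M (t + 1) *ᵥ (A t *ᵥ (v t - m t))) := by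
    intro μ
    have h := psd_nonneg hMp ((A t *ᵥ (v t - m t)) + μ • (v (t + 1) - A t *ᵥ v t))
    rw [bilin_expand _ hMsym _ _ μ] at h
    linarith
  have hAz : ((A t)ᵀ * M (t + 1) * A t) *ᵥ (v t - m t)
      = (A t)ᵀ *ᵥ (M (t + 1) *ᵥ (A t *ᵥ (v t - m t))) := by
    simp only [mulVec_mulVec]
    rw [Matrix.mul_assoc]
  have hdot : (v t - m t) ⬝ᵥ ((A t)ᵀ *ᵥ (M (t + 1) *ᵥ (A t *ᵥ (v t - m t))))
      = (A t *ᵥ (v t - m t)) ⬝ᵥ (M (t + 1) *ᵥ (A t *ᵥ (v t - m t))) := by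
    rw [dotProduct_mulVec, vecMul_transpose]
  have hcz := psd_nonneg (hcontr t ht) (v t - m t)
  rw [sub_mulVec, smul_mulVec, hAz, dotProduct_sub, dotProduct_smul, hdot,
    smul_eq_mul] at hcz
  have hYs : (A t *ᵥ (v t - m t)) ⬝ᵥ (M (t + 1) *ᵥ (A t *ᵥ (v t - m t)))
      ≤ γ * ((v t - m t) ⬝ᵥ (M t *ᵥ (v t - m t))) := by linarith
  have hsplit := scalar_split _ _ _ _ γ hXnn hYnn hsnn hγ0 hγ1 hYs hkey
  have hxy : v (t + 1) - A t *ᵥ m t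
      = (A t *ᵥ (v t - m t)) + (1:ℝ) • (v (t + 1) - A t *ᵥ v t) := by
    rw [mulVec_sub]
    ext i
    simp only [Pi.add_apply, Pi.sub_apply, Pi.smul_apply, smul_eq_mul, one_mul]
    ring
  have hdec : (v (t + 1) - A t *ᵥ m t) ⬝ᵥ (M (t + 1) *ᵥ (v (t + 1) - A t *ᵥ m t))
      = (A t *ᵥ (v t - m t)) ⬝ᵥ (M (t + 1) *ᵥ (A t *ᵥ (v t - m t)))
        + 2 * 1 * ((v (t + 1) - A t *ᵥ v t) ⬝ᵥ (M (t + 1) *ᵥ (A t *ᵥ (v t - m t))))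
        + 1 ^ 2 * ((v (t + 1) - A t *ᵥ v t) ⬝ᵥ (M (t + 1) *ᵥ (v (t + 1) - A t *ᵥ v t))) := by
    rw [hxy, bilin_expand _ hMsym _ _ 1]
  have h1γ : (0:ℝ) < 1 - γ := by linarith
  have hhalf : 1 / 2 * (((v (t + 1) - A t *ᵥ v t) ⬝ᵥ (M (t + 1) *ᵥ (v (t + 1) - A t *ᵥ v t)))
        / (1 - γ))
      = 1 / (2 * (1 - γ))
        * ((v (t + 1) - A t *ᵥ v t) ⬝ᵥ (M (t + 1) *ᵥ (v (t + 1) - A t *ᵥ v t))) := by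
    field_simp
  linarith [hopt, hsplit, hdec, hhalf]
end

section
/- Sufficient condition for stable propagation (Proposition: sufficient condition for Assumption 1): Let C, Q, P_prev be symmetric positive semidefinite matrices in ℝ^{d×d} and ℝ^{d'×d'} with A ∈ ℝ^{d'×d}, and suppose P = A C Aᵀ + Q with Q ⪰ q_min I for some q_min > 0, Aᵀ A ⪯ a_max I for some a_max > 0, and P_prev ⪯ p_max I with P_prev symmetric positive definite for some p_max > 0. If γ := a_max p_max / q_min < 1, then Aᵀ P⁻¹ A ⪯ γ P_prev⁻¹ (Loewner order). -/
open Matrix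
section Aux
variable {n m : ℕ}

lemma aux_smul_posSemidef {c : ℝ} (hc : 0 ≤ c) {M : Matrix (Fin n) (Fin n) ℝ}
    (hM : M.PosSemidef) : (c • M).PosSemidef := by
  constructor
  · show (c • M)ᴴ = c • M
    rw [conjTranspose_smul, hM.1.eq]
    simp
  · intro x
    exact (hM.smul hc).2 x

lemma aux_posDef_smul_one {c : ℝ} (hc : 0 < c) :
    (c • (1 : Matrix (Fin n) (Fin n) ℝ)).PosDef := by
  have h : c • (1 : Matrix (Fin n) (Fin n) ℝ) = diagonal (fun _ => c) := by
    ext i j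
    rcases eq_or_ne i j with rfl | hij
    · simp
    · simp [hij]
  rw [h]
  exact posDef_diagonal_iff.mpr fun _ => hc

/-- If `M` is positive definite and `M ⪰ c I` with `c > 0`, then `M⁻¹ ⪯ c⁻¹ I`. -/
lemma aux_inv_ub {M : Matrix (Fin n) (Fin n) ℝ} (hM : M.PosDef) {c : ℝ} (hc : 0 < c)
    (h : (M - c • 1).PosSemidef) : (c⁻¹ • 1 - M⁻¹).PosSemidef := by
  have hdet : IsUnit M.det := isUnit_iff_ne_zero.mpr hM.det_pos.ne'
  have h1 : M⁻¹ * M = 1 := nonsing_inv_mul M hdet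
  have h2 : M * M⁻¹ = 1 := mul_nonsing_inv M hdet
  have hinvH : M⁻¹ᴴ = M⁻¹ := hM.inv.isHermitian
  set N := M - c • 1 with hN
  have hX : (c⁻¹ • (Nᴴ * N) + N).PosSemidef :=
    (aux_smul_posSemidef (by positivity) (posSemidef_conjTranspose_mul_self N)).add h
  have key : c⁻¹ • (1 : Matrix (Fin n) (Fin n) ℝ) - M⁻¹ =
      M⁻¹ᴴ * (c⁻¹ • (Nᴴ * N) + N) * M⁻¹ := by
    have hNH : Nᴴ = N := by
      rw [hN, conjTranspose_sub, hM.isHermitian]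
      congr 1
      simp [conjTranspose_smul]
    rw [hNH]
    have hNN : c⁻¹ • (N * N) + N = c⁻¹ • (M * M) - M := by
      rw [hN]
      simp only [Matrix.mul_sub, Matrix.sub_mul, smul_mul_assoc, mul_smul_comm,
        Matrix.mul_one, Matrix.one_mul, smul_sub, smul_smul,
        inv_mul_cancel₀ hc.ne', one_smul]
      match_scalars <;> field_simp <;> ring
    rw [hNN, hinvH]
    rw [Matrix.mul_sub, Matrix.sub_mul, mul_smul_comm, smul_mul_assoc]
    have e1 : M⁻¹ * (M * M) * M⁻¹ = 1 := by
      rw [← Matrix.mul_assoc, h1, Matrix.one_mul, h2]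
    have e2 : M⁻¹ * M * M⁻¹ = M⁻¹ := by rw [h1, Matrix.one_mul]
    rw [e1, e2]
  rw [key]
  exact hX.conjTranspose_mul_mul_same _

open scoped MatrixOrder in
/-- If `M` is positive definite and `M ⪯ c I` with `c > 0`, then `M⁻¹ ⪰ c⁻¹ I`. -/
lemma aux_inv_lb {M : Matrix (Fin n) (Fin n) ℝ} (hM : M.PosDef) {c : ℝ} (hc : 0 < c)
    (h : (c • 1 - M).PosSemidef) : (M⁻¹ - c⁻¹ • 1).PosSemidef := by
  have hdet : IsUnit M.det := isUnit_iff_ne_zero.mpr hM.det_pos.ne'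
  have h1 : M⁻¹ * M = 1 := nonsing_inv_mul M hdet
  have h2 : M * M⁻¹ = 1 := mul_nonsing_inv M hdet
  have hinvH : M⁻¹ᴴ = M⁻¹ := hM.inv.isHermitian
  have hS : CFC.sqrt M * CFC.sqrt M = M := CFC.sqrt_mul_sqrt_self M hM.posSemidef.nonneg
  set S := CFC.sqrt M with hSdef
  have hSH : Sᴴ = S := (CFC.sqrt_nonneg M).posSemidef.isHermitian
  set L := c • (1 : Matrix (Fin n) (Fin n) ℝ) - M with hL
  have hLps : (c⁻¹ • L).PosSemidef := aux_smul_posSemidef (by positivity) h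
  have key : M⁻¹ - c⁻¹ • (1 : Matrix (Fin n) (Fin n) ℝ) =
      (S * M⁻¹)ᴴ * (c⁻¹ • L) * (S * M⁻¹) := by
    rw [conjTranspose_mul, hSH, hinvH]
    have step1 : M⁻¹ * S * (c⁻¹ • L) * (S * M⁻¹) = c⁻¹ • (M⁻¹ * (S * (L * (S * M⁻¹)))) := by
      simp only [mul_smul_comm, smul_mul_assoc, Matrix.mul_assoc]
    rw [step1]
    have hSMS : S * M * S = M * M := by
      calc S * M * S = S * (S * S) * S := by rw [hS]
        _ = (S * S) * (S * S) := by simp only [Matrix.mul_assoc]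
        _ = M * M := by rw [hS]
    have hSLS : S * (L * (S * M⁻¹)) = (c • M - M * M) * M⁻¹ := by
      rw [hL]
      simp only [Matrix.mul_sub, Matrix.sub_mul, smul_mul_assoc, mul_smul_comm,
        Matrix.mul_one, Matrix.one_mul, ← Matrix.mul_assoc, hS, hSMS]
    rw [hSLS]
    simp only [Matrix.mul_sub, Matrix.sub_mul, mul_smul_comm, smul_mul_assoc,
      ← Matrix.mul_assoc]
    simp only [h1, h2, Matrix.one_mul]
    rw [smul_sub, smul_smul, inv_mul_cancel₀ hc.ne', one_smul]
  rw [key]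
  exact hLps.conjTranspose_mul_mul_same _

end Aux
/-- Sufficient condition for stable propagation (Assumption 1).
`C, Pprev ∈ ℝ^{d×d}`, `Q ∈ ℝ^{d'×d'}`, `A ∈ ℝ^{d'×d}`, `P = A C Aᵀ + Q`,
`Q ⪰ qmin I`, `Aᵀ A ⪯ amax I`, `Pprev ⪯ pmax I`, `Pprev` positive definite.
If `γ = amax pmax / qmin < 1` then `Aᵀ P⁻¹ A ⪯ γ Pprev⁻¹`. -/
theorem stmt_5 (dd dd' : ℕ)
    (C Pprev : Matrix (Fin dd) (Fin dd) ℝ) (Q : Matrix (Fin dd') (Fin dd') ℝ)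
    (hC : C.PosSemidef) (hQ : Q.PosSemidef) (hPprevPSD : Pprev.PosSemidef)
    (hPprev : Pprev.PosDef)
    (A : Matrix (Fin dd') (Fin dd) ℝ)
    (P : Matrix (Fin dd') (Fin dd') ℝ) (hP : P = A * C * Aᵀ + Q)
    (qmin : ℝ) (hqmin : 0 < qmin) (hQlb : (Q - qmin • (1 : Matrix (Fin dd') (Fin dd') ℝ)).PosSemidef)
    (amax : ℝ) (hamax : 0 < amax) (hAub : (amax • (1 : Matrix (Fin dd) (Fin dd) ℝ) - Aᵀ * A).PosSemidef)
    (pmax : ℝ) (hpmax : 0 < pmax) (hPub : (pmax • (1 : Matrix (Fin dd) (Fin dd) ℝ) - Pprev).PosSemidef)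
    (hγ : amax * pmax / qmin < 1) :
    ((amax * pmax / qmin) • Pprev⁻¹ - Aᵀ * P⁻¹ * A).PosSemidef := by
  have hAT : Aᴴ = Aᵀ := conjTranspose_eq_transpose_of_trivial A
  have hACA : (A * C * Aᵀ).PosSemidef := by
    rw [← hAT]; exact hC.mul_mul_conjTranspose_same A
  have hPlb : (P - qmin • 1).PosSemidef := by
    have : P - qmin • 1 = A * C * Aᵀ + (Q - qmin • 1) := by rw [hP]; abel
    rw [this]; exact hACA.add hQlb
  have hPpd : P.PosDef := by
    have : P = (A * C * Aᵀ + (Q - qmin • 1)) + qmin • 1 := by rw [hP]; abel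
    rw [this]
    exact Matrix.PosDef.posSemidef_add (hACA.add hQlb) (aux_posDef_smul_one hqmin)
  have t3 : (Aᵀ * (qmin⁻¹ • 1 - P⁻¹) * A).PosSemidef := by
    rw [← hAT]
    exact (aux_inv_ub hPpd hqmin hPlb).conjTranspose_mul_mul_same A
  have t2 : (qmin⁻¹ • (amax • (1 : Matrix (Fin dd) (Fin dd) ℝ) - Aᵀ * A)).PosSemidef :=
    aux_smul_posSemidef (by positivity) hAub
  have t1 : ((amax * pmax / qmin) • (Pprev⁻¹ - pmax⁻¹ • 1)).PosSemidef :=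
    aux_smul_posSemidef (by positivity) (aux_inv_lb hPprev hpmax hPub)
  have hsum : (amax * pmax / qmin) • Pprev⁻¹ - Aᵀ * P⁻¹ * A =
      (amax * pmax / qmin) • (Pprev⁻¹ - pmax⁻¹ • 1) +
        qmin⁻¹ • (amax • (1 : Matrix (Fin dd) (Fin dd) ℝ) - Aᵀ * A) +
        Aᵀ * (qmin⁻¹ • 1 - P⁻¹) * A := by
    simp only [smul_sub, Matrix.mul_sub, Matrix.sub_mul, mul_smul_comm, smul_mul_assoc,
      Matrix.mul_smul, Matrix.smul_mul, Matrix.mul_one, smul_smul]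
    match_scalars <;> field_simp <;> ring
  rw [hsum]
  exact (t1.add t2).add t3
end

section
/- wCUSUM detection bound (Proposition 4, part 2): Let s̄ be a real random variable on a probability space, let m* ≥ 1 be an integer, and let δ > κ ≥ 0, h > 0, β ∈ (0,1). Assume the post-change concentration condition: for every u > 0, P(√m* · (s̄ − δ) ≤ −u) ≤ exp(−u²/2). If √m* · (δ − κ) − h ≥ √(2 log(1/β)), then P(√m* · (s̄ − κ)_+ ≤ h) ≤ β. In particular, the window-limited CUSUM statistic exceeds the threshold h on a post-change block of length m* with probability at least 1 − β whenever m* ≥ (h + √(2 log(1/β)))² / (δ − κ)². -/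
open MeasureTheory

/-- wCUSUM detection bound (Proposition 4, part 2).
`sbar` is the average standardized score over a post-change block of length
`mstar` with mean shift `δ > κ`.  Under the post-change concentration
condition, if `√mstar (δ − κ) − h ≥ √(2 log(1/β))` then
`P(√mstar (sbar − κ)₊ ≤ h) ≤ β`; in particular the statistic exceeds `h`
with probability at least `1 − β` whenever
`mstar ≥ (h + √(2 log(1/β)))² / (δ − κ)²`. -/
theorem stmt_9 {Ω : Type*} [MeasurableSpace Ω] (P : Measure Ω)
    [IsProbabilityMeasure P] (sbar : Ω → ℝ) (mstar : ℕ) (hm : 1 ≤ mstar)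
    (δ κ h β : ℝ) (hκ : 0 ≤ κ) (hδ : κ < δ) (hh : 0 < h)
    (hβ0 : 0 < β) (hβ1 : β < 1)
    (hconc : ∀ u : ℝ, 0 < u →
      P {ω | Real.sqrt (mstar : ℝ) * (sbar ω - δ) ≤ -u}
        ≤ ENNReal.ofReal (Real.exp (-u ^ 2 / 2))) :
    (Real.sqrt (2 * Real.log (1 / β)) ≤ Real.sqrt (mstar : ℝ) * (δ - κ) - h →
      P {ω | Real.sqrt (mstar : ℝ) * max (sbar ω - κ) 0 ≤ h} ≤ ENNReal.ofReal β)
    ∧ ((h + Real.sqrt (2 * Real.log (1 / β))) ^ 2 / (δ - κ) ^ 2 ≤ (mstar : ℝ) →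
      ENNReal.ofReal (1 - β)
        ≤ P {ω | h < Real.sqrt (mstar : ℝ) * max (sbar ω - κ) 0}) := by

  have hlogpos : 0 < Real.log (1 / β) := Real.log_pos (one_lt_one_div hβ0 hβ1)
  set c := Real.sqrt (2 * Real.log (1 / β)) with hc
  have hcpos : 0 < c := Real.sqrt_pos.mpr (by linarith)
  have hc2 : c ^ 2 = 2 * Real.log (1 / β) := Real.sq_sqrt (by linarith)
  have hsm : 0 ≤ Real.sqrt (mstar : ℝ) := Real.sqrt_nonneg _
  have part1 : Real.sqrt (2 * Real.log (1 / β)) ≤ Real.sqrt (mstar : ℝ) * (δ - κ) - h →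
      P {ω | Real.sqrt (mstar : ℝ) * max (sbar ω - κ) 0 ≤ h} ≤ ENNReal.ofReal β := by
    intro hineq
    set u := Real.sqrt (mstar : ℝ) * (δ - κ) - h with hu
    have hupos : 0 < u := lt_of_lt_of_le hcpos hineq
    have hsub : {ω | Real.sqrt (mstar : ℝ) * max (sbar ω - κ) 0 ≤ h}
        ⊆ {ω | Real.sqrt (mstar : ℝ) * (sbar ω - δ) ≤ -u} := by
      intro ω hω
      simp only [Set.mem_setOf_eq] at hω ⊢
      have h1 : Real.sqrt (mstar : ℝ) * (sbar ω - κ)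
          ≤ Real.sqrt (mstar : ℝ) * max (sbar ω - κ) 0 :=
        mul_le_mul_of_nonneg_left (le_max_left _ _) hsm
      nlinarith
    calc P {ω | Real.sqrt (mstar : ℝ) * max (sbar ω - κ) 0 ≤ h}
        ≤ P {ω | Real.sqrt (mstar : ℝ) * (sbar ω - δ) ≤ -u} := measure_mono hsub
      _ ≤ ENNReal.ofReal (Real.exp (-u ^ 2 / 2)) := hconc u hupos
      _ ≤ ENNReal.ofReal β := by
          apply ENNReal.ofReal_le_ofReal
          have hu2 : c ^ 2 ≤ u ^ 2 := by nlinarith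
          calc Real.exp (-u ^ 2 / 2) ≤ Real.exp (Real.log β) := by
                apply Real.exp_le_exp.mpr
                have : Real.log (1 / β) = -Real.log β := by
                  rw [Real.log_div one_ne_zero (ne_of_gt hβ0), Real.log_one]; ring
                nlinarith
            _ = β := Real.exp_log hβ0
  refine ⟨part1, ?_⟩
  intro hm2
  have hδκ : 0 < δ - κ := by linarith
  have hq : 0 ≤ (h + c) / (δ - κ) := div_nonneg (by linarith) (le_of_lt hδκ)
  have hsm2 : (h + c) / (δ - κ) ≤ Real.sqrt (mstar : ℝ) := by
    rw [show (h + c) / (δ - κ) = Real.sqrt (((h + c) / (δ - κ)) ^ 2) from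
      (Real.sqrt_sq hq).symm]
    apply Real.sqrt_le_sqrt
    rw [div_pow]
    exact hm2
  have hineq : c ≤ Real.sqrt (mstar : ℝ) * (δ - κ) - h := by
    have := mul_le_mul_of_nonneg_right hsm2 (le_of_lt hδκ)
    rw [div_mul_cancel₀ _ (ne_of_gt hδκ)] at this
    linarith
  have hP := part1 hineq
  set A := {ω | Real.sqrt (mstar : ℝ) * max (sbar ω - κ) 0 ≤ h}
  set B := {ω | h < Real.sqrt (mstar : ℝ) * max (sbar ω - κ) 0}
  have hcover : (Set.univ : Set Ω) ⊆ A ∪ B := by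
    intro ω _
    rcases le_or_gt (Real.sqrt (mstar : ℝ) * max (sbar ω - κ) 0) h with h1 | h1
    · exact Or.inl h1
    · exact Or.inr h1
  have h1 : (1 : ENNReal) ≤ P A + P B := by
    calc (1 : ENNReal) = P Set.univ := (measure_univ).symm
      _ ≤ P (A ∪ B) := measure_mono hcover
      _ ≤ P A + P B := measure_union_le _ _
  have hsplit : (1 : ENNReal) = ENNReal.ofReal β + ENNReal.ofReal (1 - β) := by
    rw [← ENNReal.ofReal_add (le_of_lt hβ0) (by linarith), ← ENNReal.ofReal_one]
    norm_num
  have : ENNReal.ofReal β + ENNReal.ofReal (1 - β) ≤ ENNReal.ofReal β + P B := by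
    calc ENNReal.ofReal β + ENNReal.ofReal (1 - β) = 1 := hsplit.symm
      _ ≤ P A + P B := h1
      _ ≤ ENNReal.ofReal β + P B := add_le_add_left hP _
  exact ENNReal.le_of_add_le_add_left ENNReal.ofReal_ne_top this
end

section
/- Expected detection delay bound (Proposition: finite-horizon restart bounds, part (b)): Let (Ω, F, P) be a probability space with filtration (F_t)_{t≥0}, let (Z_t)_{t≥1} be adapted, conditionally ι-sub-Gaussian increments (for some ι > 0), and let (μ_t)_{t≥1} be F_{t−1}-measurable with μ_t ≥ μ_1 almost surely for all t, where μ_1 > 0. Define S_m = Σ_{j=1}^m (μ_j + Z_j) and the hitting time D_h = inf{m ≥ 1 : S_m ≥ h} for h > 0. Then E[D_h] ≤ ⌈2h/μ_1⌉ + 1 / (1 − exp(−μ_1² / (8 ι²))). In particular, E[D_h] ≤ ⌈2h/μ_1⌉ + 1 + 8ι²/μ_1², so E[D_h] = O(h/μ_1 + ι²/μ_1²). -/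
open MeasureTheory ENNReal

lemma stmt13_mgf {Ω : Type*} {m0 : MeasurableSpace Ω} (P : Measure Ω)
    [IsProbabilityMeasure P] (ℱ : Filtration ℕ m0)
    (Z : ℕ → Ω → ℝ) (ι : ℝ)
    (hadapt : ∀ t, 1 ≤ t → StronglyMeasurable[ℱ t] (Z t))
    (hZint : ∀ (l : ℝ) (t : ℕ), 1 ≤ t →
      MeasureTheory.Integrable (fun ω => Real.exp (l * Z t ω)) P)
    (hsg : ∀ (l : ℝ) (t : ℕ), 1 ≤ t →
      ∀ᵐ ω ∂P, (P[fun ω' => Real.exp (l * Z t ω') | ℱ (t - 1)]) ω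
        ≤ Real.exp (l ^ 2 * ι ^ 2 / 2)) (l : ℝ) :
    ∀ n : ℕ, ∫⁻ ω, ENNReal.ofReal (Real.exp (l * ∑ u ∈ Finset.Icc 1 n, Z u ω)) ∂P
      ≤ ENNReal.ofReal (Real.exp (n * (l ^ 2 * ι ^ 2 / 2))) := by
  have hZmeas : ∀ t, 1 ≤ t → Measurable (Z t) :=
    fun t ht => ((hadapt t ht).mono (ℱ.le t)).measurable
  intro n
  induction n with
  | zero => simp
  | succ n ih =>
    set M : Ω → ℝ := fun ω => ∑ u ∈ Finset.Icc 1 n, Z u ω with hMdef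
    set f : Ω → ℝ := fun ω => Real.exp (l * M ω) with hfdef
    set g : Ω → ℝ := fun ω => Real.exp (l * Z (n + 1) ω) with hgdef
    have hMmeas : Measurable M := by
      apply Finset.measurable_sum
      intro u hu
      exact hZmeas u (Finset.mem_Icc.mp hu).1
    have hMsm : StronglyMeasurable[ℱ n] M := by
      apply Finset.stronglyMeasurable_fun_sum
      intro u hu
      rcases Finset.mem_Icc.mp hu with ⟨h1, h2⟩
      exact (hadapt u h1).mono (ℱ.mono h2)
    have hfmeas : Measurable f := ((hMmeas.const_mul l).exp)
    have hfsm : StronglyMeasurable[ℱ n] f :=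
      ((hMsm.measurable.const_mul l).exp).stronglyMeasurable
    have hfpos : ∀ ω, 0 < f ω := fun ω => Real.exp_pos _
    have hgpos : ∀ ω, 0 < g ω := fun ω => Real.exp_pos _
    have hgmeas : Measurable g := ((hZmeas (n+1) (by omega)).const_mul l).exp
    have hgint : Integrable g P := hZint l (n+1) (by omega)
    have hsplit : ∀ ω, Real.exp (l * ∑ u ∈ Finset.Icc 1 (n+1), Z u ω) = f ω * g ω := by
      intro ω
      rw [Finset.sum_Icc_succ_top (by omega : 1 ≤ n + 1), mul_add, Real.exp_add]
    have C := Real.exp (l ^ 2 * ι ^ 2 / 2)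
    -- bound with truncation
    have key : ∀ N : ℕ, ∫⁻ ω, ENNReal.ofReal (min (f ω) N * g ω) ∂P
        ≤ ENNReal.ofReal (Real.exp (l ^ 2 * ι ^ 2 / 2)) *
          ∫⁻ ω, ENNReal.ofReal (f ω) ∂P := by
      intro N
      set fN : Ω → ℝ := fun ω => min (f ω) N with hfN
      have hfNnonneg : ∀ ω, 0 ≤ fN ω := fun ω => le_min (hfpos ω).le (Nat.cast_nonneg N)
      have hfNbdd : ∀ ω, ‖fN ω‖ ≤ (N : ℝ) := by
        intro ω
        rw [Real.norm_eq_abs, abs_of_nonneg (hfNnonneg ω)]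
        exact min_le_right _ _
      have hfNmeas : Measurable fN := hfmeas.min measurable_const
      have hfNsm : StronglyMeasurable[ℱ n] fN :=
        (hfsm.measurable.min measurable_const).stronglyMeasurable
      have hfNint : Integrable fN P :=
        (integrable_const ((N : ℝ))).mono' hfNmeas.aestronglyMeasurable
          (Filter.Eventually.of_forall hfNbdd)
      have hφint : Integrable (fun ω => fN ω * g ω) P :=
        hgint.bdd_mul hfNmeas.aestronglyMeasurable (Filter.Eventually.of_forall hfNbdd)
      have hpull : P[fun ω => fN ω * g ω | ℱ n] =ᵐ[P] fun ω => fN ω * (P[g | ℱ n]) ω :=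
        condExp_mul_of_stronglyMeasurable_left hfNsm hφint hgint
      have hsgn : ∀ᵐ ω ∂P, (P[g | ℱ n]) ω ≤ Real.exp (l ^ 2 * ι ^ 2 / 2) := by
        have := hsg l (n+1) (by omega)
        simpa using this
      have hint1 : Integrable (fun ω => fN ω * (P[g | ℱ n]) ω) P :=
        integrable_condExp.bdd_mul hfNmeas.aestronglyMeasurable (Filter.Eventually.of_forall hfNbdd)
      have hint2 : Integrable (fun ω => fN ω * Real.exp (l ^ 2 * ι ^ 2 / 2)) P :=
        hfNint.mul_const _
      have hstep : ∫ ω, fN ω * g ω ∂P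
          ≤ Real.exp (l ^ 2 * ι ^ 2 / 2) * ∫ ω, fN ω ∂P := by
        have h1 : ∫ ω, fN ω * g ω ∂P = ∫ ω, (P[fun ω => fN ω * g ω | ℱ n]) ω ∂P :=
          (integral_condExp (ℱ.le n)).symm
        rw [h1, integral_congr_ae hpull]
        calc ∫ ω, fN ω * (P[g | ℱ n]) ω ∂P
            ≤ ∫ ω, fN ω * Real.exp (l ^ 2 * ι ^ 2 / 2) ∂P := by
              apply integral_mono_ae hint1 hint2
              filter_upwards [hsgn] with ω hω
              exact mul_le_mul_of_nonneg_left hω (hfNnonneg ω)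
          _ = Real.exp (l ^ 2 * ι ^ 2 / 2) * ∫ ω, fN ω ∂P := by
              rw [integral_mul_const]; ring
      calc ∫⁻ ω, ENNReal.ofReal (fN ω * g ω) ∂P
          = ENNReal.ofReal (∫ ω, fN ω * g ω ∂P) :=
            (ofReal_integral_eq_lintegral_ofReal hφint
              (Filter.Eventually.of_forall fun ω =>
                mul_nonneg (hfNnonneg ω) (hgpos ω).le)).symm
        _ ≤ ENNReal.ofReal (Real.exp (l ^ 2 * ι ^ 2 / 2) * ∫ ω, fN ω ∂P) :=
            ENNReal.ofReal_le_ofReal hstep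
        _ = ENNReal.ofReal (Real.exp (l ^ 2 * ι ^ 2 / 2)) *
              ENNReal.ofReal (∫ ω, fN ω ∂P) :=
            ENNReal.ofReal_mul (Real.exp_pos _).le
        _ ≤ ENNReal.ofReal (Real.exp (l ^ 2 * ι ^ 2 / 2)) *
              ∫⁻ ω, ENNReal.ofReal (f ω) ∂P := by
            gcongr
            rw [ofReal_integral_eq_lintegral_ofReal hfNint
              (Filter.Eventually.of_forall hfNnonneg)]
            exact lintegral_mono fun ω => ENNReal.ofReal_le_ofReal (min_le_left _ _)
    -- monotone convergence
    have hsup : ∫⁻ ω, ENNReal.ofReal (f ω * g ω) ∂P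
        = ⨆ N : ℕ, ∫⁻ ω, ENNReal.ofReal (min (f ω) N * g ω) ∂P := by
      rw [← lintegral_iSup]
      · apply lintegral_congr
        intro ω
        apply le_antisymm
        · refine le_iSup_of_le ⌈f ω⌉₊ ?_
          rw [min_eq_left (Nat.le_ceil _)]
        · exact iSup_le fun N => ENNReal.ofReal_le_ofReal
            (mul_le_mul_of_nonneg_right (min_le_left _ _) (hgpos ω).le)
      · intro N
        exact ((hfmeas.min measurable_const).mul hgmeas).ennreal_ofReal
      · intro i j hij ω
        exact ENNReal.ofReal_le_ofReal
          (mul_le_mul_of_nonneg_right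
            (min_le_min le_rfl (Nat.cast_le.mpr hij)) (hgpos ω).le)
    calc ∫⁻ ω, ENNReal.ofReal (Real.exp (l * ∑ u ∈ Finset.Icc 1 (n+1), Z u ω)) ∂P
        = ∫⁻ ω, ENNReal.ofReal (f ω * g ω) ∂P := by
          apply lintegral_congr; intro ω; rw [hsplit]
      _ = ⨆ N : ℕ, ∫⁻ ω, ENNReal.ofReal (min (f ω) N * g ω) ∂P := hsup
      _ ≤ ENNReal.ofReal (Real.exp (l ^ 2 * ι ^ 2 / 2)) *
            ∫⁻ ω, ENNReal.ofReal (f ω) ∂P := iSup_le key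
      _ ≤ ENNReal.ofReal (Real.exp (l ^ 2 * ι ^ 2 / 2)) *
            ENNReal.ofReal (Real.exp (n * (l ^ 2 * ι ^ 2 / 2))) := by gcongr
      _ = ENNReal.ofReal (Real.exp ((n + 1 : ℕ) * (l ^ 2 * ι ^ 2 / 2))) := by
          rw [← ENNReal.ofReal_mul (Real.exp_pos _).le, ← Real.exp_add]
          push_cast
          ring_nf

set_option maxHeartbeats 1000000 in
/-- expected detection delay bound (part (b)).  In the setting
of the post-change restart statistic, with `D = inf{m ≥ 1 : S m ≥ h}`
(valued in `ℝ≥0∞`, `= ∞` if no such `m`), its expectation `∫⁻ D ∂P`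
satisfies `E[D] ≤ ⌈2h/μ1⌉ + 1/(1 − exp(−μ1²/(8ι²)))`, and in particular
`E[D] ≤ ⌈2h/μ1⌉ + 1 + 8ι²/μ1²`. -/
theorem stmt_13 {Ω : Type*} {m0 : MeasurableSpace Ω} (P : Measure Ω)
    [IsProbabilityMeasure P] (ℱ : Filtration ℕ m0)
    (Z : ℕ → Ω → ℝ) (ι : ℝ) (hι : 0 < ι)
    (hadapt : ∀ t, 1 ≤ t → StronglyMeasurable[ℱ t] (Z t))
    (hZint : ∀ (l : ℝ) (t : ℕ), 1 ≤ t →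
      MeasureTheory.Integrable (fun ω => Real.exp (l * Z t ω)) P)
    (hsg : ∀ (l : ℝ) (t : ℕ), 1 ≤ t →
      ∀ᵐ ω ∂P, (P[fun ω' => Real.exp (l * Z t ω') | ℱ (t - 1)]) ω
        ≤ Real.exp (l ^ 2 * ι ^ 2 / 2))
    (μt : ℕ → Ω → ℝ)
    (hμmeas : ∀ t, 1 ≤ t → StronglyMeasurable[ℱ (t - 1)] (μt t))
    (μ1 : ℝ) (hμ1 : 0 < μ1)
    (hμlb : ∀ t, 1 ≤ t → ∀ᵐ ω ∂P, μ1 ≤ μt t ω)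
    (h : ℝ) (hh : 0 < h) :
    let S : ℕ → Ω → ℝ := fun t ω => ∑ u ∈ Finset.Icc 1 t, (μt u ω + Z u ω)
    let D : Ω → ℝ≥0∞ := fun ω =>
      sInf {x : ℝ≥0∞ | ∃ m : ℕ, 1 ≤ m ∧ h ≤ S m ω ∧ x = (m : ℝ≥0∞)}
    (∫⁻ ω, D ω ∂P
        ≤ ENNReal.ofReal ((⌈2 * h / μ1⌉₊ : ℝ)
            + 1 / (1 - Real.exp (-μ1 ^ 2 / (8 * ι ^ 2)))))
      ∧ (∫⁻ ω, D ω ∂P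
        ≤ ENNReal.ofReal ((⌈2 * h / μ1⌉₊ : ℝ) + 1 + 8 * ι ^ 2 / μ1 ^ 2)) := by
  classical
  intro S D
  have hZmeas : ∀ t, 1 ≤ t → Measurable (Z t) :=
    fun t ht => ((hadapt t ht).mono (ℱ.le t)).measurable
  have hSmeas : ∀ m : ℕ, Measurable (S m) := by
    intro m
    apply Finset.measurable_sum
    intro u hu
    have h1 := (Finset.mem_Icc.mp hu).1
    exact (((hμmeas u h1).mono (ℱ.le _)).measurable).add (hZmeas u h1)
  set c : ℝ := μ1 ^ 2 / (8 * ι ^ 2) with hcdef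
  have hcpos : 0 < c := by positivity
  have hexplt1 : Real.exp (-c) < 1 := Real.exp_lt_one_iff.mpr (by linarith)
  set K : ℕ := ⌈2 * h / μ1⌉₊ with hKdef
  have hK1 : 1 ≤ K := Nat.ceil_pos.mpr (by positivity)
  set B : ℕ → Set Ω := fun n => {ω | ∀ m, 1 ≤ m → m ≤ n → S m ω < h} with hBdef
  have hBmem : ∀ n ω, ω ∈ B n ↔ ∀ m, 1 ≤ m → m ≤ n → S m ω < h := by
    intro n ω; rw [hBdef]; rfl
  have hBmeas : ∀ n, MeasurableSet (B n) := by
    intro n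
    have heq : B n = ⋂ m ∈ Finset.Icc 1 n, {ω | S m ω < h} := by
      ext ω
      simp only [hBmem, Set.mem_iInter, Finset.mem_Icc, Set.mem_setOf_eq, and_imp]
    rw [heq]
    exact Finset.measurableSet_biInter _
      (fun m _ => measurableSet_lt (hSmeas m) measurable_const)
  -- pointwise bound on D
  have hDle : ∀ ω, D ω ≤ ∑' n : ℕ, (B n).indicator (fun _ => (1 : ℝ≥0∞)) ω := by
    intro ω
    by_cases hex : ∃ m : ℕ, 1 ≤ m ∧ h ≤ S m ω
    · letI : DecidablePred (fun m : ℕ => 1 ≤ m ∧ h ≤ S m ω) :=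
        fun _ => Classical.dec _
      have hspec := Nat.find_spec hex
      have hDk : D ω ≤ (Nat.find hex : ℝ≥0∞) :=
        sInf_le ⟨Nat.find hex, hspec.1, hspec.2, rfl⟩
      have hmem : ∀ n, n < Nat.find hex → ω ∈ B n := by
        intro n hn
        rw [hBmem]
        intro m h1m hmn
        by_contra hge
        push_neg at hge
        have := Nat.find_le (h := hex) (⟨h1m, hge⟩ : 1 ≤ m ∧ h ≤ S m ω)
        omega
      calc D ω ≤ (Nat.find hex : ℝ≥0∞) := hDk
        _ = ∑ n ∈ Finset.range (Nat.find hex),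
              (B n).indicator (fun _ => (1 : ℝ≥0∞)) ω := by
            rw [Finset.sum_congr rfl fun n hn =>
              Set.indicator_of_mem (hmem n (Finset.mem_range.mp hn)) _]
            simp
        _ ≤ ∑' n : ℕ, (B n).indicator (fun _ => (1 : ℝ≥0∞)) ω :=
            ENNReal.sum_le_tsum _
    · have h1 : ∀ n, ω ∈ B n := by
        intro n
        rw [hBmem]
        intro m h1m hmn
        by_contra hge
        push_neg at hge
        exact hex ⟨m, h1m, hge⟩
      have heq : ∑' n : ℕ, (B n).indicator (fun _ => (1 : ℝ≥0∞)) ω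
          = ∑' _ : ℕ, (1 : ℝ≥0∞) :=
        tsum_congr fun n => Set.indicator_of_mem (h1 n) _
      rw [heq, ENNReal.tsum_const_eq_top_of_ne_zero one_ne_zero]
      exact le_top
  -- a.e. lower bound on μt
  have hae : ∀ᵐ ω ∂P, ∀ u : ℕ, 1 ≤ u → μ1 ≤ μt u ω := by
    rw [ae_all_iff]
    intro u
    by_cases hu : 1 ≤ u
    · filter_upwards [hμlb u hu] with ω hω _
      exact hω
    · filter_upwards with ω h1
      exact absurd h1 hu
  -- tail bound
  have hBtail : ∀ n : ℕ, K ≤ n → P (B n) ≤ ENNReal.ofReal (Real.exp (-(c * n))) := by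
    intro n hn
    have hn1 : 1 ≤ n := le_trans hK1 hn
    have hnpos : (0 : ℝ) < n := by exact_mod_cast hn1
    set a : ℝ := n * μ1 - h with hadef
    have hnμ : 2 * h ≤ n * μ1 := by
      have h1 : 2 * h / μ1 ≤ (K : ℝ) := Nat.le_ceil _
      have h2 : (K : ℝ) ≤ n := Nat.cast_le.mpr hn
      rw [div_le_iff₀ hμ1] at h1
      nlinarith
    have hapos : 0 < a := by rw [hadef]; linarith
    have hsub : B n ⊆ {ω | S n ω < h} := fun ω hω => (hBmem n ω).mp hω n hn1 le_rfl
    have hsub2 : {ω | S n ω < h} ≤ᵐ[P] {ω | ∑ u ∈ Finset.Icc 1 n, Z u ω ≤ -a} := by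
      filter_upwards [hae] with ω hω hmem
      have hsum : (n : ℝ) * μ1 + ∑ u ∈ Finset.Icc 1 n, Z u ω ≤ S n ω := by
        have hterm : ∀ u ∈ Finset.Icc 1 n, μ1 + Z u ω ≤ μt u ω + Z u ω := by
          intro u hu
          have := hω u (Finset.mem_Icc.mp hu).1
          linarith
        calc (n : ℝ) * μ1 + ∑ u ∈ Finset.Icc 1 n, Z u ω
            = ∑ u ∈ Finset.Icc 1 n, (μ1 + Z u ω) := by
              rw [Finset.sum_add_distrib, Finset.sum_const, Nat.card_Icc,
                Nat.add_sub_cancel, nsmul_eq_mul]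
          _ ≤ S n ω := Finset.sum_le_sum hterm
      have hmem' : S n ω < h := hmem
      show ∑ u ∈ Finset.Icc 1 n, Z u ω ≤ -a
      rw [hadef]
      linarith
    -- Chernoff
    set Mn : Ω → ℝ := fun ω => ∑ u ∈ Finset.Icc 1 n, Z u ω with hMn
    have hMmeas : Measurable Mn := by
      apply Finset.measurable_sum
      intro u hu
      exact hZmeas u (Finset.mem_Icc.mp hu).1
    set l : ℝ := -(a / (n * ι ^ 2)) with hl
    have hlneg : l < 0 := by
      rw [hl, neg_lt_zero]
      positivity
    have hset : MeasurableSet {ω | Mn ω ≤ -a} :=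
      measurableSet_le hMmeas measurable_const
    have hind : ∀ ω, Set.indicator {ω | Mn ω ≤ -a} (fun _ => (1 : ℝ≥0∞)) ω
        ≤ ENNReal.ofReal (Real.exp (l * Mn ω)) * ENNReal.ofReal (Real.exp (l * a)) := by
      intro ω
      by_cases hω : ω ∈ {ω | Mn ω ≤ -a}
      · rw [Set.indicator_of_mem hω]
        rw [← ENNReal.ofReal_mul (Real.exp_pos _).le, ← Real.exp_add]
        rw [ENNReal.one_le_ofReal]
        apply Real.one_le_exp
        have h1 : l * (-a) ≤ l * Mn ω := mul_le_mul_of_nonpos_left hω hlneg.le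
        linarith
      · rw [Set.indicator_of_notMem hω]
        exact zero_le
    have hexp : (n : ℝ) * (l ^ 2 * ι ^ 2 / 2) + l * a = -(a ^ 2 / (2 * n * ι ^ 2)) := by
      rw [hl]
      field_simp
      ring
    have hchern : P {ω | Mn ω ≤ -a}
        ≤ ENNReal.ofReal (Real.exp (-(a ^ 2 / (2 * n * ι ^ 2)))) := by
      calc P {ω | Mn ω ≤ -a}
          = ∫⁻ ω, Set.indicator {ω | Mn ω ≤ -a} (fun _ => (1 : ℝ≥0∞)) ω ∂P :=
            (lintegral_indicator_one hset).symm
        _ ≤ ∫⁻ ω, ENNReal.ofReal (Real.exp (l * Mn ω))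
              * ENNReal.ofReal (Real.exp (l * a)) ∂P := lintegral_mono hind
        _ = (∫⁻ ω, ENNReal.ofReal (Real.exp (l * Mn ω)) ∂P)
              * ENNReal.ofReal (Real.exp (l * a)) :=
            lintegral_mul_const _ ((hMmeas.const_mul l).exp.ennreal_ofReal)
        _ ≤ ENNReal.ofReal (Real.exp (n * (l ^ 2 * ι ^ 2 / 2)))
              * ENNReal.ofReal (Real.exp (l * a)) := by
            gcongr
            exact stmt13_mgf P ℱ Z ι hadapt hZint hsg l n
        _ = ENNReal.ofReal (Real.exp (-(a ^ 2 / (2 * n * ι ^ 2)))) := by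
            rw [← ENNReal.ofReal_mul (Real.exp_pos _).le, ← Real.exp_add, hexp]
    have hfinal : Real.exp (-(a ^ 2 / (2 * n * ι ^ 2))) ≤ Real.exp (-(c * n)) := by
      apply Real.exp_le_exp.mpr
      rw [neg_le_neg_iff]
      have ha2 : n * μ1 / 2 ≤ a := by rw [hadef]; linarith
      rw [hcdef]
      rw [div_mul_eq_mul_div, div_le_div_iff₀ (by positivity) (by positivity)]
      have hsq : (↑n * μ1 / 2) ^ 2 ≤ a ^ 2 := pow_le_pow_left₀ (by positivity) ha2 2
      calc μ1 ^ 2 * ↑n * (2 * ↑n * ι ^ 2) = (↑n * μ1 / 2) ^ 2 * (8 * ι ^ 2) := by ring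
        _ ≤ a ^ 2 * (8 * ι ^ 2) :=
          mul_le_mul_of_nonneg_right hsq (by positivity)
    calc P (B n) ≤ P {ω | S n ω < h} := measure_mono hsub
      _ ≤ P {ω | Mn ω ≤ -a} := measure_mono_ae hsub2
      _ ≤ ENNReal.ofReal (Real.exp (-(a ^ 2 / (2 * n * ι ^ 2)))) := hchern
      _ ≤ ENNReal.ofReal (Real.exp (-(c * n))) := ENNReal.ofReal_le_ofReal hfinal
  -- summation
  have hgeo_div_pos : (0 : ℝ) < 1 - Real.exp (-c) := by linarith
  have hmain : ∫⁻ ω, D ω ∂P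
      ≤ ENNReal.ofReal (K : ℝ) + ENNReal.ofReal (1 / (1 - Real.exp (-c))) := by
    calc ∫⁻ ω, D ω ∂P
        ≤ ∫⁻ ω, ∑' n : ℕ, (B n).indicator (fun _ => (1 : ℝ≥0∞)) ω ∂P :=
          lintegral_mono hDle
      _ = ∑' n : ℕ, ∫⁻ ω, (B n).indicator (fun _ => (1 : ℝ≥0∞)) ω ∂P :=
          lintegral_tsum fun n =>
            ((measurable_const (a := (1:ℝ≥0∞))).indicator (hBmeas n)).aemeasurable
      _ = ∑' n : ℕ, P (B n) := tsum_congr fun n => lintegral_indicator_one (hBmeas n)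
      _ = ∑' n : ℕ, ((if n < K then P (B n) else 0) + (if K ≤ n then P (B n) else 0)) := by
          apply tsum_congr
          intro n
          by_cases hn : n < K
          · simp [hn, Nat.not_le.mpr hn]
          · simp [hn, Nat.le_of_not_lt hn]
      _ = (∑' n : ℕ, if n < K then P (B n) else 0)
            + ∑' n : ℕ, (if K ≤ n then P (B n) else 0) := ENNReal.tsum_add
      _ ≤ ENNReal.ofReal (K : ℝ) + ENNReal.ofReal (1 / (1 - Real.exp (-c))) := by
          apply add_le_add
          · calc (∑' n : ℕ, if n < K then P (B n) else 0)
                = ∑ n ∈ Finset.range K, (if n < K then P (B n) else 0) :=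
                  tsum_eq_sum (fun b hb => if_neg (by simpa using hb))
              _ ≤ ∑ _n ∈ Finset.range K, (1 : ℝ≥0∞) := by
                  apply Finset.sum_le_sum
                  intro n _
                  split
                  · exact prob_le_one
                  · exact zero_le_one
              _ = (K : ℝ≥0∞) := by simp
              _ = ENNReal.ofReal (K : ℝ) := (ENNReal.ofReal_natCast K).symm
          · calc ∑' n : ℕ, (if K ≤ n then P (B n) else 0)
                ≤ ∑' n : ℕ, ENNReal.ofReal (Real.exp (-c) ^ n) := by
                  apply ENNReal.tsum_le_tsum
                  intro n
                  by_cases hn : K ≤ n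
                  · rw [if_pos hn]
                    have hpow : Real.exp (-c) ^ n = Real.exp (-(c * n)) := by
                      rw [← Real.exp_nat_mul]
                      congr 1
                      ring
                    rw [hpow]
                    exact hBtail n hn
                  · rw [if_neg hn]
                    exact zero_le
              _ = ENNReal.ofReal (1 / (1 - Real.exp (-c))) := by
                  rw [← ENNReal.ofReal_tsum_of_nonneg
                    (fun k => pow_nonneg (Real.exp_pos _).le k)
                    (summable_geometric_of_lt_one (Real.exp_pos _).le hexplt1)]
                  rw [tsum_geometric_of_lt_one (Real.exp_pos _).le hexplt1, one_div]
  have hexpc : -μ1 ^ 2 / (8 * ι ^ 2) = -c := by rw [hcdef]; ring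
  have hgoal1 : ∫⁻ ω, D ω ∂P
      ≤ ENNReal.ofReal ((K : ℝ) + 1 / (1 - Real.exp (-μ1 ^ 2 / (8 * ι ^ 2)))) := by
    rw [hexpc, ENNReal.ofReal_add (Nat.cast_nonneg K) (by positivity)]
    exact hmain
  refine ⟨hgoal1, le_trans hgoal1 (ENNReal.ofReal_le_ofReal ?_)⟩
  rw [hexpc]
  have h1c : 1 / (1 - Real.exp (-c)) ≤ 1 + 8 * ι ^ 2 / μ1 ^ 2 := by
    have haoe : 1 + c ≤ Real.exp c := by
      have := Real.add_one_le_exp c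
      linarith
    have he : Real.exp (-c) ≤ 1 / (1 + c) := by
      rw [Real.exp_neg, one_div]
      exact inv_anti₀ (by linarith) haoe
    have h2 : c / (1 + c) ≤ 1 - Real.exp (-c) := by
      have hfr : 1 - 1 / (1 + c) = c / (1 + c) := by field_simp; ring
      linarith
    have h3 : (0 : ℝ) < c / (1 + c) := by positivity
    calc 1 / (1 - Real.exp (-c)) ≤ 1 / (c / (1 + c)) :=
          one_div_le_one_div_of_le h3 h2
      _ = (1 + c) / c := one_div_div _ _
      _ = 1 + 1 / c := by field_simp <;> ring
      _ = 1 + 8 * ι ^ 2 / μ1 ^ 2 := by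
          rw [hcdef, one_div_div]
  linarith
end
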